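/- Suppose rank(X) = n and the outputs are generated noise-free as y_t = ⟨x_t, θ^o⟩ + f_t for all t ∈ 𝕀, for some θ^o ∈ ℝ^n and f ∈ ℝ^N, so that I⁰(θ^o) = {t ∈ 𝕀 : f_t = 0}. If |I⁰(θ^o)| > N − 1/(2 r(X)), then θ^o is the unique minimizer of the ℓ1 problem: ‖φ(θ^o)‖₁ < ‖φ(θ)‖₁ for all θ ≠ θ^o. -/

import Mathlib

/-!
Write `v t = ⟨x_t, θ^o - θ⟩`, so that `φ(θ) = φ(θ^o) + v`. Since `X Xᵀ` is invertible, `v` is fixed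
by the hat matrix `Xᵀ (X Xᵀ)⁻¹ X`, whence `|v_k| ≤ r(X) ‖v‖₁` for every `k`. Moving from `θ^o` to
`θ` gains exactly `|v_t|` on each `t ∈ I⁰(θ^o)` and loses at most `|v_t|` elsewhere, and the
`N - |I⁰(θ^o)| < 1 / (2 r(X))` indices outside `I⁰(θ^o)` carry less than half of `‖v‖₁`.
-/

open Matrix Finset

/-- The Gram matrix `X X^⊤` of the regressor matrix `X`. -/
noncomputable def gramX (n N : ℕ) (x : Fin N → Fin n → ℝ) :
    Matrix (Fin n) (Fin n) ℝ :=
  Matrix.of fun i j => ∑ t, x t i * x t j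

/-- `r(X) = max_{(k,t) ∈ 𝕀²} |x_k^⊤ (X X^⊤)⁻¹ x_t|`, expressed as the supremum
of the (finite, nonempty when `N ≥ 1`) set of such values. -/
noncomputable def rX (n N : ℕ) (x : Fin N → Fin n → ℝ) : ℝ :=
  sSup {v : ℝ | ∃ k t : Fin N, v = |x k ⬝ᵥ ((gramX n N x)⁻¹ *ᵥ x t)|}

theorem Matrix.isUnit_of_rank_eq_card {m K : Type*} [Fintype m] [DecidableEq m] [Field K]
    {A : Matrix m m K} (h : A.rank = Fintype.card m) : IsUnit A := by
  rw [← mulVec_surjective_iff_isUnit]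
  exact LinearMap.range_eq_top.mp <|
    Submodule.eq_top_of_finrank_eq (h.trans (Module.finrank_fintype_fun_eq_card K).symm)

theorem sum_abs_lt_sum_abs_add {ι : Type*} [Fintype ι] [DecidableEq ι] (e v : ι → ℝ)
    (Z : Finset ι) (hZ : ∀ t ∈ Z, e t = 0) {r : ℝ} (hv : v ≠ 0)
    (hvr : ∀ k, |v k| ≤ r * ∑ t, |v t|) (hcard : (#Z : ℝ) > Fintype.card ι - 1 / (2 * r)) :
    ∑ t, |e t| < ∑ t, |e t + v t| := by
  set S := ∑ t, |v t|
  obtain ⟨k, hk⟩ := Function.ne_iff.mp hv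
  have hS : 0 < S := sum_pos' (fun t _ => abs_nonneg (v t)) ⟨k, mem_univ k, abs_pos.mpr hk⟩
  have hr : 0 < r := pos_of_mul_pos_left ((abs_pos.mpr hk).trans_le (hvr k)) hS.le
  have hZc : ∑ t ∈ Zᶜ, |v t| < S / 2 :=
    calc ∑ t ∈ Zᶜ, |v t| ≤ #Zᶜ * (r * S) := by
          simpa using sum_le_card_nsmul Zᶜ _ _ fun t _ => hvr t
      _ = (Fintype.card ι - #Z) * r * S := by
          rw [card_compl, Nat.cast_sub (card_le_univ Z)]; ring
      _ < 1 / (2 * r) * r * S := by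
          gcongr
          linarith
      _ = S / 2 := by field_simp
  have hgain : ∑ t ∈ Z, |v t| = ∑ t ∈ Z, |e t + v t| :=
    sum_congr rfl fun t ht => by rw [hZ t ht, zero_add]
  have hloss : ∑ t ∈ Zᶜ, (|e t| - |v t|) ≤ ∑ t ∈ Zᶜ, |e t + v t| :=
    sum_le_sum fun t _ => by simpa using abs_sub_abs_le_abs_sub (e t) (-v t)
  have he : ∑ t ∈ Z, |e t| = 0 := sum_eq_zero fun t ht => by rw [hZ t ht, abs_zero]
  have hSsplit : S = ∑ t ∈ Z, |v t| + ∑ t ∈ Zᶜ, |v t| := (sum_add_sum_compl Z _).symm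
  rw [sum_sub_distrib] at hloss
  rw [← sum_add_sum_compl Z, ← sum_add_sum_compl Z]
  linarith

section Gram

variable {n N : ℕ} (x : Fin N → Fin n → ℝ)

theorem gramX_eq_mul_transpose :
    gramX n N x = (of fun i t => x t i : Matrix (Fin n) (Fin N) ℝ) * (of fun i t => x t i)ᵀ := by
  ext i j
  simp [gramX, mul_apply]

theorem isUnit_gramX (hrank : (of fun i t => x t i : Matrix (Fin n) (Fin N) ℝ).rank = n) :
    IsUnit (gramX n N x) :=
  isUnit_of_rank_eq_card <| by
    rw [gramX_eq_mul_transpose, rank_self_mul_transpose, hrank, Fintype.card_fin]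

theorem gramX_mulVec (Δ : Fin n → ℝ) : gramX n N x *ᵥ Δ = ∑ t, (x t ⬝ᵥ Δ) • x t := by
  ext i
  simp only [mulVec, dotProduct, gramX, of_apply, sum_mul, Finset.sum_apply, Pi.smul_apply,
    smul_eq_mul]
  rw [sum_comm]
  exact sum_congr rfl fun t _ => sum_congr rfl fun j _ => by ring

variable {x}

theorem dotProduct_ne_zero_of_isUnit_gramX (hG : IsUnit (gramX n N x)) {Δ : Fin n → ℝ}
    (hΔ : Δ ≠ 0) : (fun t => x t ⬝ᵥ Δ) ≠ 0 := by
  intro hzero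
  apply hΔ
  apply mulVec_injective_iff_isUnit.mpr hG
  simp [gramX_mulVec, funext_iff.mp hzero]

theorem dotProduct_eq_sum_of_isUnit_gramX (hG : IsUnit (gramX n N x)) (k : Fin N)
    (Δ : Fin n → ℝ) :
    x k ⬝ᵥ Δ = ∑ t, x k ⬝ᵥ ((gramX n N x)⁻¹ *ᵥ x t) * (x t ⬝ᵥ Δ) := by
  have hΔ : Δ = (gramX n N x)⁻¹ *ᵥ (gramX n N x *ᵥ Δ) := by
    rw [mulVec_mulVec, nonsing_inv_mul _ ((isUnit_iff_isUnit_det _).mp hG), one_mulVec]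
  conv_lhs => rw [hΔ, gramX_mulVec, mulVec_sum, dotProduct_sum]
  simp only [mulVec_smul, dotProduct_smul, smul_eq_mul, mul_comm]

theorem abs_le_rX (k t : Fin N) : |x k ⬝ᵥ ((gramX n N x)⁻¹ *ᵥ x t)| ≤ rX n N x := by
  refine le_csSup (Set.Finite.bddAbove ?_) ⟨k, t, rfl⟩
  refine (Set.finite_range fun p : Fin N × Fin N =>
    |x p.1 ⬝ᵥ ((gramX n N x)⁻¹ *ᵥ x p.2)|).subset ?_
  rintro _ ⟨k, t, rfl⟩
  exact ⟨(k, t), rfl⟩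

theorem abs_dotProduct_le_rX_mul (hG : IsUnit (gramX n N x)) (Δ : Fin n → ℝ) (k : Fin N) :
    |x k ⬝ᵥ Δ| ≤ rX n N x * ∑ t, |x t ⬝ᵥ Δ| :=
  calc |x k ⬝ᵥ Δ| ≤ ∑ t, |x k ⬝ᵥ ((gramX n N x)⁻¹ *ᵥ x t) * (x t ⬝ᵥ Δ)| := by
        rw [dotProduct_eq_sum_of_isUnit_gramX hG k Δ]
        exact abs_sum_le_sum_abs _ _
    _ ≤ ∑ t, rX n N x * |x t ⬝ᵥ Δ| :=
        sum_le_sum fun t _ => by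
          rw [abs_mul]
          exact mul_le_mul_of_nonneg_right (abs_le_rX k t) (abs_nonneg _)
    _ = rX n N x * ∑ t, |x t ⬝ᵥ Δ| := (mul_sum _ _ _).symm

end Gram

theorem stmt10_general (n N : ℕ)
    (x : Fin N → Fin n → ℝ) (y : Fin N → ℝ)
    (θo : Fin n → ℝ)
    (hrank : (Matrix.of fun i t => x t i : Matrix (Fin n) (Fin N) ℝ).rank = n)
    (hcard : (((univ.filter (fun t => x t ⬝ᵥ θo = y t)).card : ℝ)) >
      (N : ℝ) - 1 / (2 * rX n N x)) :
    ∀ θ : Fin n → ℝ, θ ≠ θo →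
      ∑ t, |y t - x t ⬝ᵥ θo| < ∑ t, |y t - x t ⬝ᵥ θ| := by
  intro θ hθ
  have hG := isUnit_gramX x hrank
  have key := sum_abs_lt_sum_abs_add (fun t => y t - x t ⬝ᵥ θo) (fun t => x t ⬝ᵥ (θo - θ))
    (univ.filter fun t => x t ⬝ᵥ θo = y t) (fun t ht => by simp [(mem_filter.mp ht).2])
    (dotProduct_ne_zero_of_isUnit_gramX hG (sub_ne_zero.mpr hθ.symm))
    (abs_dotProduct_le_rX_mul hG _) (by simpa using hcard)
  convert key using 3 with t
  rw [dotProduct_sub]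
  ring

/-- Noise-free data, `rank X = n` and
`|I⁰(θ^o)| > N − 1/(2 r(X))` imply that `θ^o` is the unique minimizer of the
ℓ1 problem. -/
theorem stmt10 (n N : ℕ) (hn : 1 ≤ n) (hN : 1 ≤ N)
    (x : Fin N → Fin n → ℝ) (y : Fin N → ℝ)
    (θo : Fin n → ℝ) (f : Fin N → ℝ)
    (hrank : (Matrix.of fun i t => x t i : Matrix (Fin n) (Fin N) ℝ).rank = n)
    (hdata : ∀ t, y t = x t ⬝ᵥ θo + f t)
    (hcard : (((univ.filter (fun t => x t ⬝ᵥ θo = y t)).card : ℝ)) >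
      (N : ℝ) - 1 / (2 * rX n N x)) :
    ∀ θ : Fin n → ℝ, θ ≠ θo →
      ∑ t, |y t - x t ⬝ᵥ θo| < ∑ t, |y t - x t ⬝ᵥ θ| :=
  stmt10_general n N x y θo hrank hcard
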